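/- Let A ∈ ℝ^{m×np} and Q = A^T A ∈ ℝ^{np×np} with column blocks Q = [Q₁,…,Q_p], Q_j ∈ ℝ^{np×n}. Fix s ≥ 1 and η ≥ 0, and let z ∈ ℝ^{np} satisfy ‖A^T A z‖_{b∞} ≤ 1 and ‖z‖_{b1} ≤ sη. Then for every index i ∈ {1,…,p} and every matrix P_i ∈ ℝ^{np×n}, partitioned into row blocks P_i^1,…,P_i^p with each P_i^l ∈ ℝ^{n×n}, the i-th block of z satisfies ‖z_i‖₂ ≤ sη · max_{1≤j≤p} ‖δ_{ij} I_n − P_iᵀ Q_j‖₂ + Σ_{l=1}^p ‖P_i^l‖₂, where ‖·‖₂ on matrices is the spectral norm. Consequently, f_s(η) := sup{‖z‖_{b∞} : ‖A^T A z‖_{b∞} ≤ 1, ‖z‖_{b1} ≤ sη} ≤ max_i inf_{P_i} ( sη · max_j ‖δ_{ij} I_n − P_iᵀ Q_j‖₂ + Σ_{l=1}^p ‖P_i^l‖₂ ). -/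

import Mathlib

open MeasureTheory ProbabilityTheory Finset Matrix

/-- Euclidean norm of a finitely-indexed real vector. -/
noncomputable def vnorm {ι : Type*} [Fintype ι] (v : ι → ℝ) : ℝ :=
  Real.sqrt (∑ i, (v i) ^ 2)

/-- Euclidean norm of the `i`-th block of `x ∈ ℝ^{np}` (blocks indexed by `Fin p`). -/
noncomputable def bnorm {n p : ℕ} (x : Fin p × Fin n → ℝ) (i : Fin p) : ℝ :=
  vnorm (fun j => x (i, j))

/-- Block-ℓ1 norm: `‖x‖_{b1} = ∑ i, ‖x_i‖₂`. -/
noncomputable def bl1 {n p : ℕ} (x : Fin p × Fin n → ℝ) : ℝ :=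
  ∑ i, bnorm x i

/-- Block-ℓ∞ norm: `‖x‖_{b∞} = max_i ‖x_i‖₂`. -/
noncomputable def blinf {n p : ℕ} (x : Fin p × Fin n → ℝ) : ℝ :=
  ⨆ i, bnorm x i

open scoped Classical in
/-- Block support: indices of nonzero blocks. -/
noncomputable def bsupp {n p : ℕ} (x : Fin p × Fin n → ℝ) : Finset (Fin p) :=
  Finset.univ.filter (fun i => ∃ j, x (i, j) ≠ 0)

/-- `ω₂(A,s) = inf { ‖Az‖₂ / ‖z‖_{b∞} : z ≠ 0, ‖z‖_{b1} ≤ s ‖z‖_{b∞} }`. -/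
noncomputable def omega2 {m n p : ℕ} (A : Matrix (Fin m) (Fin p × Fin n) ℝ) (s : ℝ) : ℝ :=
  sInf {r | ∃ z : Fin p × Fin n → ℝ, z ≠ 0 ∧ bl1 z ≤ s * blinf z ∧
    r = vnorm (A.mulVec z) / blinf z}

/-- `ω_{b∞}(AᵀA,s) = inf { ‖AᵀAz‖_{b∞} / ‖z‖_{b∞} : z ≠ 0, ‖z‖_{b1} ≤ s ‖z‖_{b∞} }`. -/
noncomputable def omegaBInf {m n p : ℕ} (A : Matrix (Fin m) (Fin p × Fin n) ℝ) (s : ℝ) : ℝ :=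
  sInf {r | ∃ z : Fin p × Fin n → ℝ, z ≠ 0 ∧ bl1 z ≤ s * blinf z ∧
    r = blinf ((Aᵀ * A).mulVec z) / blinf z}

/-- Block ℓ1-constrained minimal singular value
`ρ_s(A) = inf { ‖Az‖₂ / ‖z‖₂ : z ≠ 0, ‖z‖_{b1}² ≤ s ‖z‖₂² }`. -/
noncomputable def rhoCMSV {m n p : ℕ} (A : Matrix (Fin m) (Fin p × Fin n) ℝ) (s : ℝ) : ℝ :=
  sInf {r | ∃ z : Fin p × Fin n → ℝ, z ≠ 0 ∧ (bl1 z) ^ 2 ≤ s * (vnorm z) ^ 2 ∧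
    r = vnorm (A.mulVec z) / vnorm z}

/-- Spectral norm (largest singular value) of a real matrix, as the ℓ2→ℓ2 operator norm. -/
noncomputable def specNorm {ι κ : Type*} [Fintype ι] [Fintype κ] (M : Matrix ι κ ℝ) : ℝ :=
  sSup {r | ∃ v : κ → ℝ, vnorm v ≤ 1 ∧ r = vnorm (M.mulVec v)}

/-- The `j`-th column block (of `n` columns) of a matrix with `np` columns. -/
def colBlock {ι : Type*} {n p : ℕ} (Q : Matrix ι (Fin p × Fin n) ℝ) (j : Fin p) :
    Matrix ι (Fin n) ℝ := Matrix.of fun r c => Q r (j, c)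

/-- The `l`-th row block (of `n` rows) of a matrix with `np` rows. -/
def rowBlock {κ : Type*} {n p : ℕ} (P : Matrix (Fin p × Fin n) κ ℝ) (l : Fin p) :
    Matrix (Fin n) κ ℝ := Matrix.of fun r c => P (l, r) c

/-- `δ_{ij} Iₙ`. -/
def deltaId (n : ℕ) {p : ℕ} (i j : Fin p) : Matrix (Fin n) (Fin n) ℝ :=
  if i = j then 1 else 0

/-- Orlicz ψ₂ norm of a scalar random variable. -/
noncomputable def psi2 {Ω : Type*} [MeasurableSpace Ω] (μ : Measure Ω) (Y : Ω → ℝ) : ℝ :=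
  sInf {t | 0 < t ∧ ∫ ω, Real.exp ((Y ω) ^ 2 / t ^ 2) ∂μ ≤ 2}

/-! For every `P`, the column blocks `Qⱼ` of `Q` give
`zᵢ = ∑ⱼ (δᵢⱼ Iₙ - Pᵀ Qⱼ) zⱼ + Pᵀ (Q z)`. The sum is at most `maxⱼ ‖δᵢⱼ Iₙ - Pᵀ Qⱼ‖₂ · ‖z‖_{b1}`,
and `Pᵀ (Q z) = ∑ₗ (Pˡ)ᵀ (Q z)ₗ` has terms of norm at most `‖Pˡ‖₂` because `‖Q z‖_{b∞} ≤ 1`.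
The bound on `f_s(η)` follows by taking the infimum over `P` and the maximum over `i`.
`specNorm` is identified with Mathlib's ℓ²-operator norm on matrices, which yields
`‖Mᵀ‖₂ = ‖M‖₂`. -/

open scoped Matrix.Norms.L2Operator

section EuclideanNorms

variable {ι κ : Type*} [Fintype ι] [Fintype κ]

lemma vnorm_eq_norm (v : ι → ℝ) : vnorm v = ‖WithLp.toLp 2 v‖ := by
  simp [vnorm, EuclideanSpace.norm_eq]

lemma vnorm_add_le (u v : ι → ℝ) : vnorm (u + v) ≤ vnorm u + vnorm v := by
  simpa only [vnorm_eq_norm, WithLp.toLp_add] using norm_add_le _ _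

lemma vnorm_sum_le (f : κ → ι → ℝ) : vnorm (∑ k, f k) ≤ ∑ k, vnorm (f k) := by
  simpa only [vnorm_eq_norm, WithLp.toLp_sum] using norm_sum_le _ _

lemma specNorm_eq_l2_opNorm [DecidableEq κ] (M : Matrix ι κ ℝ) : specNorm M = ‖M‖ := by
  rw [l2_opNorm_def, ← ContinuousLinearMap.sSup_unitClosedBall_eq_norm, specNorm]
  congr 1
  ext r
  constructor
  · rintro ⟨v, hv, rfl⟩
    exact ⟨WithLp.toLp 2 v, by simpa [vnorm_eq_norm] using hv, by simp [vnorm_eq_norm]⟩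
  · rintro ⟨x, hx, rfl⟩
    refine ⟨x.ofLp, by simpa [vnorm_eq_norm] using hx, ?_⟩
    simp [vnorm_eq_norm]; rfl

lemma specNorm_nonneg (M : Matrix ι κ ℝ) : 0 ≤ specNorm M := by
  classical
  exact (specNorm_eq_l2_opNorm M).symm ▸ norm_nonneg M

lemma specNorm_transpose (M : Matrix ι κ ℝ) : specNorm Mᵀ = specNorm M := by
  classical
  simpa only [specNorm_eq_l2_opNorm, conjTranspose_eq_transpose_of_trivial] using
    l2_opNorm_conjTranspose M

lemma vnorm_mulVec_le (M : Matrix ι κ ℝ) (v : κ → ℝ) :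
    vnorm (M *ᵥ v) ≤ specNorm M * vnorm v := by
  classical
  rw [specNorm_eq_l2_opNorm, vnorm_eq_norm, vnorm_eq_norm]
  exact l2_opNorm_mulVec M (WithLp.toLp 2 v)

end EuclideanNorms

section Blocks

variable {n p : ℕ}

lemma bnorm_nonneg (x : Fin p × Fin n → ℝ) (i : Fin p) : 0 ≤ bnorm x i :=
  Real.sqrt_nonneg _

lemma bl1_nonneg (x : Fin p × Fin n → ℝ) : 0 ≤ bl1 x :=
  Finset.sum_nonneg fun i _ => bnorm_nonneg x i

lemma bnorm_le_blinf (x : Fin p × Fin n → ℝ) (i : Fin p) : bnorm x i ≤ blinf x :=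
  le_ciSup (Set.finite_range _).bddAbove i

lemma sum_colBlock_mulVec {ι : Type*} (Q : Matrix ι (Fin p × Fin n) ℝ) (z : Fin p × Fin n → ℝ) :
    ∑ j, colBlock Q j *ᵥ (fun c => z (j, c)) = Q *ᵥ z := by
  funext r
  simp only [Finset.sum_apply, mulVec, dotProduct, colBlock, of_apply]
  exact (Fintype.sum_prod_type fun x => Q r x * z x).symm

lemma transpose_mulVec_eq_sum_rowBlock {κ : Type*} (P : Matrix (Fin p × Fin n) κ ℝ)
    (w : Fin p × Fin n → ℝ) :
    Pᵀ *ᵥ w = ∑ l, (rowBlock P l)ᵀ *ᵥ (fun c => w (l, c)) := by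
  funext c
  simp only [Finset.sum_apply, mulVec, dotProduct, rowBlock, transpose_apply, of_apply]
  exact Fintype.sum_prod_type _

lemma sum_deltaId_mulVec (z : Fin p × Fin n → ℝ) (i : Fin p) :
    ∑ j, deltaId n i j *ᵥ (fun c => z (j, c)) = fun c => z (i, c) := by
  rw [Finset.sum_eq_single_of_mem i (Finset.mem_univ i) fun j _ hji => by
    simp [deltaId, Ne.symm hji]]
  simp [deltaId]

lemma block_eq_sum_add_transpose_mulVec {ι : Type*} [Fintype ι] (Q : Matrix ι (Fin p × Fin n) ℝ)
    (P : Matrix ι (Fin n) ℝ) (z : Fin p × Fin n → ℝ) (i : Fin p) :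
    (fun c => z (i, c)) =
      ∑ j, (deltaId n i j - Pᵀ * colBlock Q j) *ᵥ (fun c => z (j, c)) + Pᵀ *ᵥ (Q *ᵥ z) := by
  simp only [sub_mulVec, Finset.sum_sub_distrib, sum_deltaId_mulVec, ← mulVec_mulVec,
    ← mulVec_sum, sum_colBlock_mulVec, sub_add_cancel]

lemma vnorm_transpose_mulVec_le {κ : Type*} [Fintype κ] (P : Matrix (Fin p × Fin n) κ ℝ)
    (w : Fin p × Fin n → ℝ) :
    vnorm (Pᵀ *ᵥ w) ≤ ∑ l, specNorm (rowBlock P l) * bnorm w l := by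
  rw [transpose_mulVec_eq_sum_rowBlock]
  refine (vnorm_sum_le _).trans (Finset.sum_le_sum fun l _ => ?_)
  rw [← specNorm_transpose]
  exact vnorm_mulVec_le _ _

lemma bnorm_le_iSup_mul_bl1_add {ι : Type*} [Fintype ι] (Q : Matrix ι (Fin p × Fin n) ℝ)
    (P : Matrix ι (Fin n) ℝ) (z : Fin p × Fin n → ℝ) (i : Fin p) :
    bnorm z i ≤ (⨆ j, specNorm (deltaId n i j - Pᵀ * colBlock Q j)) * bl1 z +
      vnorm (Pᵀ *ᵥ (Q *ᵥ z)) := by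
  set S := ⨆ j, specNorm (deltaId n i j - Pᵀ * colBlock Q j)
  have hS (j : Fin p) : specNorm (deltaId n i j - Pᵀ * colBlock Q j) ≤ S :=
    le_ciSup (Set.finite_range fun j => specNorm (deltaId n i j - Pᵀ * colBlock Q j)).bddAbove j
  calc bnorm z i
      ≤ vnorm (∑ j, (deltaId n i j - Pᵀ * colBlock Q j) *ᵥ (fun c => z (j, c))) +
          vnorm (Pᵀ *ᵥ (Q *ᵥ z)) := by
        rw [bnorm, block_eq_sum_add_transpose_mulVec Q P z i]
        exact vnorm_add_le _ _
    _ ≤ ∑ j, S * bnorm z j + vnorm (Pᵀ *ᵥ (Q *ᵥ z)) := by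
        gcongr
        refine (vnorm_sum_le _).trans (Finset.sum_le_sum fun j _ => ?_)
        exact (vnorm_mulVec_le _ _).trans
          (mul_le_mul_of_nonneg_right (hS j) (bnorm_nonneg z j))
    _ = S * bl1 z + vnorm (Pᵀ *ᵥ (Q *ᵥ z)) := by rw [← Finset.mul_sum, bl1]

lemma bnorm_le_of_blinf_le_one (Q : Matrix (Fin p × Fin n) (Fin p × Fin n) ℝ)
    {c : ℝ} {z : Fin p × Fin n → ℝ} (hQz : blinf (Q *ᵥ z) ≤ 1) (hz : bl1 z ≤ c)
    (i : Fin p) (P : Matrix (Fin p × Fin n) (Fin n) ℝ) :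
    bnorm z i ≤ c * (⨆ j, specNorm (deltaId n i j - Pᵀ * colBlock Q j)) +
      ∑ l, specNorm (rowBlock P l) := by
  have hS : 0 ≤ ⨆ j, specNorm (deltaId n i j - Pᵀ * colBlock Q j) :=
    Real.iSup_nonneg fun j => specNorm_nonneg _
  have hPQz : vnorm (Pᵀ *ᵥ (Q *ᵥ z)) ≤ ∑ l, specNorm (rowBlock P l) :=
    (vnorm_transpose_mulVec_le P _).trans <| Finset.sum_le_sum fun l _ =>
      mul_le_of_le_one_right (specNorm_nonneg _) ((bnorm_le_blinf _ l).trans hQz)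
  calc bnorm z i ≤ _ := bnorm_le_iSup_mul_bl1_add Q P z i
    _ ≤ _ := by rw [mul_comm c]; gcongr

lemma sSup_blinf_le_iSup_sInf (Q : Matrix (Fin p × Fin n) (Fin p × Fin n) ℝ) {c : ℝ}
    (hc : 0 ≤ c) :
    sSup {r | ∃ z : Fin p × Fin n → ℝ, blinf (Q *ᵥ z) ≤ 1 ∧ bl1 z ≤ c ∧ r = blinf z} ≤
      ⨆ i : Fin p, sInf {r | ∃ P : Matrix (Fin p × Fin n) (Fin n) ℝ,
        r = c * (⨆ j, specNorm (deltaId n i j - Pᵀ * colBlock Q j)) +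
          ∑ l, specNorm (rowBlock P l)} := by
  refine Real.sSup_le ?_ (Real.iSup_nonneg fun i => Real.sInf_nonneg ?_)
  · rintro _ ⟨z, hQz, hz, rfl⟩
    refine ciSup_mono (Set.finite_range _).bddAbove fun i => le_csInf ⟨_, 0, rfl⟩ ?_
    rintro _ ⟨P, rfl⟩
    exact bnorm_le_of_blinf_le_one Q hQz hz i P
  · rintro _ ⟨P, rfl⟩
    exact add_nonneg (mul_nonneg hc (Real.iSup_nonneg fun j => specNorm_nonneg _))
      (Finset.sum_nonneg fun l _ => specNorm_nonneg _)

end Blocks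

theorem stmt17_general {m n p : ℕ} (A : Matrix (Fin m) (Fin p × Fin n) ℝ) (s η : ℝ)
    (z : Fin p × Fin n → ℝ)
    (hz1 : blinf ((Aᵀ * A).mulVec z) ≤ 1) (hz2 : bl1 z ≤ s * η) :
    (∀ (i : Fin p) (P : Matrix (Fin p × Fin n) (Fin n) ℝ),
      bnorm z i ≤
        s * η * (⨆ j : Fin p, specNorm (deltaId n i j - Pᵀ * colBlock (Aᵀ * A) j)) +
          ∑ l : Fin p, specNorm (rowBlock P l)) ∧
    sSup {r | ∃ z' : Fin p × Fin n → ℝ,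
        blinf ((Aᵀ * A).mulVec z') ≤ 1 ∧ bl1 z' ≤ s * η ∧ r = blinf z'} ≤
      ⨆ i : Fin p, sInf {r | ∃ P : Matrix (Fin p × Fin n) (Fin n) ℝ,
        r = s * η * (⨆ j : Fin p, specNorm (deltaId n i j - Pᵀ * colBlock (Aᵀ * A) j)) +
          ∑ l : Fin p, specNorm (rowBlock P l)} :=
  ⟨bnorm_le_of_blinf_le_one (Aᵀ * A) hz1 hz2,
    sSup_blinf_le_iSup_sInf (Aᵀ * A) ((bl1_nonneg z).trans hz2)⟩

/-- Proposition 4, case `Q = AᵀA`, `⋄ = b∞`: if `‖AᵀAz‖_{b∞} ≤ 1` and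
`‖z‖_{b1} ≤ sη`, then for every `i` and every `P_i ∈ ℝ^{np×n}` with row blocks `P_i^l`,
`‖z_i‖₂ ≤ sη max_j ‖δ_{ij} Iₙ - P_iᵀ Q_j‖₂ + ∑ l ‖P_i^l‖₂`; consequently
`f_s(η) ≤ max_i inf_{P_i} (sη max_j ‖δ_{ij} Iₙ - P_iᵀ Q_j‖₂ + ∑ l ‖P_i^l‖₂)`. -/
theorem stmt17 {m n p : ℕ} (A : Matrix (Fin m) (Fin p × Fin n) ℝ) (s η : ℝ)
    (hs : 1 ≤ s) (hη : 0 ≤ η)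
    (z : Fin p × Fin n → ℝ)
    (hz1 : blinf ((Aᵀ * A).mulVec z) ≤ 1) (hz2 : bl1 z ≤ s * η) :
    (∀ (i : Fin p) (P : Matrix (Fin p × Fin n) (Fin n) ℝ),
      bnorm z i ≤
        s * η * (⨆ j : Fin p, specNorm (deltaId n i j - Pᵀ * colBlock (Aᵀ * A) j)) +
          ∑ l : Fin p, specNorm (rowBlock P l)) ∧
    sSup {r | ∃ z' : Fin p × Fin n → ℝ,
        blinf ((Aᵀ * A).mulVec z') ≤ 1 ∧ bl1 z' ≤ s * η ∧ r = blinf z'} ≤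
      ⨆ i : Fin p, sInf {r | ∃ P : Matrix (Fin p × Fin n) (Fin n) ℝ,
        r = s * η * (⨆ j : Fin p, specNorm (deltaId n i j - Pᵀ * colBlock (Aᵀ * A) j)) +
          ∑ l : Fin p, specNorm (rowBlock P l)} :=
  stmt17_general A s η z hz1 hz2
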